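/- Let L be a cubic algebra and let J ⊆ I be special subalgebras of L. Then the intersection of all special subalgebras H of L with H ∨ J = I equals J → I; that is, ⋂{H : H is a special subalgebra of L and H ∨ J = I} = {h ∈ I : h ∨ g = 1 for all g ∈ J}, where H ∨ J := {h ∧ g : h ∈ H, g ∈ J, and h ∧ g exists in L}. -/

import Mathlib

universe u

/-- A cubic algebra: a join-semilattice with greatest element `⊤` and a binary
operation `Δ` satisfying the axioms of Bailey–Oliveira. `dot x y` is the derived
implication operation `x·y = Δ(⊤, Δ(x ⊔ y, y)) ⊔ y`. -/
class CubicAlgebra (L : Type u) extends SemilatticeSup L, OrderTop L where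
  Δ : L → L → L
  dot : L → L → L
  dot_def : ∀ x y : L, dot x y = Δ ⊤ (Δ (x ⊔ y) y) ⊔ y
  Δ_join : ∀ x y : L, x ≤ y → Δ y x ⊔ x = y
  Δ_comp : ∀ x y z : L, x ≤ y → y ≤ z → Δ z (Δ y x) = Δ (Δ z y) (Δ z x)
  Δ_invol : ∀ x y : L, x ≤ y → Δ y (Δ y x) = x
  Δ_mono : ∀ x y z : L, x ≤ y → y ≤ z → Δ z x ≤ Δ z y
  dot_dot : ∀ x y : L, dot (dot x y) y = x ⊔ y
  dot_exch : ∀ x y z : L, dot x (dot y z) = dot y (dot x z)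

namespace CubicAlgebra

variable {L : Type u} [CubicAlgebra L]

/-- `a ∼ b` iff `Δ(a ⊔ b, a) = b`. -/
def sim (a b : L) : Prop := Δ (a ⊔ b) a = b

/-- `m` is the greatest lower bound of `a` and `b`. -/
def IsMeet (a b m : L) : Prop := m ≤ a ∧ m ≤ b ∧ ∀ c : L, c ≤ a → c ≤ b → c ≤ m

/-- A special subalgebra of a cubic algebra. -/
structure IsSpecial (S : Set L) : Prop where
  top_mem : (⊤ : L) ∈ S
  upward : ∀ x ∈ S, ∀ y : L, x ≤ y → y ∈ S
  dot_mem : ∀ x ∈ S, ∀ y ∈ S, dot x y ∈ S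
  compat : ∀ x ∈ S, ∀ y ∈ S, x ⊔ Δ ⊤ y = ⊤
  meet_mem : ∀ x ∈ S, ∀ y ∈ S, ∀ m : L, IsMeet x y m → m ∈ S

/-- `A ∨ B` for sets: all existing meets `a ∧ b`, `a ∈ A`, `b ∈ B`. -/
def svee (A B : Set L) : Set L := {z | ∃ a ∈ A, ∃ b ∈ B, IsMeet a b z}

/-- `J → I` for sets. -/
def sarrow (J I : Set L) : Set L := {h | h ∈ I ∧ ∀ g ∈ J, h ⊔ g = ⊤}

/-- `Δ(J, I) := J ∨ Δ(⊤, J → I)`. -/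
def sDelta (J I : Set L) : Set L := svee J ((fun b => Δ ⊤ b) '' sarrow J I)

/-- `I_g := {Δ(g ⊔ f, f) : f ∈ I}`. -/
def shift (I : Set L) (g : L) : Set L := {z | ∃ f ∈ I, z = Δ (g ⊔ f) f}

/-
For `g ∈ J` the set `J_g := {h ∈ I : h ⊔ g = ⊤}` is special and `J_g ∨ J = I`, because every
`f ∈ I` is the meet of `g·f ∈ J_g` and `g ⊔ f ∈ J`; hence the intersection lies in
`⋂_{g ∈ J} J_g = J → I`. Closure of `J_g` under meets is the substantial step: it rests on
`g·m ≤ x` whenever `m ≤ x` and `x ⊔ g = ⊤`, which follows from the exchange law for `·`.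
Conversely, if `x ∈ J → I` and `x = a ∧ b` with `a ∈ H`, `b ∈ J`, then `x ≤ b` and `x ⊔ b = ⊤`
force `b = ⊤`, so `x = a ∈ H`.
-/

lemma Δ_le {x y : L} (h : x ≤ y) : Δ y x ≤ y :=
  le_of_le_of_eq le_sup_left (Δ_join x y h)

lemma Δ_self (y : L) : Δ y y = y := by
  have hle : Δ y y ≤ y := Δ_le le_rfl
  refine le_antisymm hle ?_
  calc y = Δ y (Δ y y) := (Δ_invol y y le_rfl).symm
    _ ≤ Δ y y := Δ_mono _ _ _ hle le_rfl

lemma le_dot (x y : L) : y ≤ dot x y := by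
  rw [dot_def]
  exact le_sup_right

lemma top_dot (y : L) : dot ⊤ y = y := by
  rw [dot_def, top_sup_eq, Δ_invol y ⊤ le_top, sup_idem]

lemma dot_eq_top_iff {x y : L} : dot x y = ⊤ ↔ x ≤ y := by
  constructor
  · intro h
    have hxy := dot_dot x y
    rw [h, top_dot] at hxy
    exact le_sup_left.trans hxy.ge
  · intro h
    rw [dot_def, sup_eq_right.mpr h, Δ_self]
    exact Δ_join y ⊤ le_top

lemma dot_eq_right_iff {x y : L} : dot x y = y ↔ x ⊔ y = ⊤ := by
  constructor
  · intro h
    rw [← dot_dot x y, h, dot_eq_top_iff]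
  · intro h
    rw [dot_def, h, Δ_invol y ⊤ le_top, sup_idem]

lemma dot_dot_of_le {x y : L} (h : y ≤ x) : dot (dot x y) y = x := by
  rw [dot_dot, sup_eq_left.mpr h]

lemma sup_dot_eq_top (x y : L) : x ⊔ dot x y = ⊤ := by
  have hΔ : Δ (x ⊔ y) y ≤ x ⊔ dot x y :=
    (Δ_le le_sup_right).trans (sup_le_sup_left (le_dot x y) x)
  have hΔΔ : Δ ⊤ (Δ (x ⊔ y) y) ≤ x ⊔ dot x y := by
    rw [dot_def]
    exact le_sup_of_le_right le_sup_left
  exact top_unique ((Δ_join _ ⊤ le_top).symm.trans_le (sup_le hΔΔ hΔ))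

-- `G := (g·m)·x` is fixed by `g·_` and lies above `g`, hence is `⊤`.
lemma dot_le_of_le_of_sup_eq_top {g m x : L} (hmx : m ≤ x) (hxg : x ⊔ g = ⊤) :
    dot g m ≤ x := by
  set G := dot (dot g m) x
  have hgx : dot g x = x := dot_eq_right_iff.mpr (sup_comm x g ▸ hxg)
  have hgG : dot g G = G := by
    rw [← dot_exch, hgx]
  have hG : G = dot (dot x m) (g ⊔ m) := by
    calc G = dot (dot g m) (dot (dot x m) m) := by rw [dot_dot_of_le hmx]
      _ = dot (dot x m) (g ⊔ m) := by rw [dot_exch, dot_dot]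
  have hgleG : g ≤ G := hG ▸ le_sup_left.trans (le_dot _ _)
  have hGtop : G = ⊤ := by
    rw [← sup_eq_right.mpr hgleG]
    exact dot_eq_right_iff.mp hgG
  exact dot_eq_top_iff.mp hGtop

lemma isMeet_dot_sup (x y : L) : IsMeet (dot x y) (x ⊔ y) y := by
  refine ⟨le_dot x y, le_sup_right, fun c hc hc' => ?_⟩
  set e := c ⊔ y
  have hx : x ≤ dot e y := by
    rw [← dot_eq_top_iff, dot_exch, dot_eq_top_iff]
    exact sup_le hc (le_dot x y)
  have he : e ≤ dot e y := (sup_le hc' le_sup_right).trans (sup_le hx (le_dot e y))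
  have hey : dot e y = ⊤ := by
    rw [← sup_eq_right.mpr he]
    exact sup_dot_eq_top e y
  exact le_sup_left.trans (dot_eq_top_iff.mp hey)

lemma IsMeet.sup_eq_top {x y m g : L} (hm : IsMeet x y m) (hx : x ⊔ g = ⊤)
    (hy : y ⊔ g = ⊤) : g ⊔ m = ⊤ := by
  have hgm : dot g m = m := le_antisymm
    (hm.2.2 _ (dot_le_of_le_of_sup_eq_top hm.1 hx) (dot_le_of_le_of_sup_eq_top hm.2.1 hy))
    (le_dot g m)
  exact dot_eq_right_iff.mp hgm

lemma IsMeet.eq_left_of_sup_eq_top {x y m : L} (hm : IsMeet x y m) (hmy : m ⊔ y = ⊤) :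
    m = x := by
  have hy : y = ⊤ := by rwa [sup_eq_right.mpr hm.2.1] at hmy
  exact le_antisymm hm.1 (hm.2.2 x le_rfl (hy ▸ le_top))

lemma IsSpecial.sarrow {I : Set L} (hI : IsSpecial I) (J : Set L) :
    IsSpecial (sarrow J I) where
  top_mem := ⟨hI.top_mem, fun g _ => top_sup_eq g⟩
  upward x hx y hxy :=
    ⟨hI.upward x hx.1 y hxy, fun g hg => top_unique ((hx.2 g hg).ge.trans (sup_le_sup_right hxy g))⟩
  dot_mem x hx y hy :=
    ⟨hI.dot_mem x hx.1 y hy.1,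
      fun g hg => top_unique ((hy.2 g hg).ge.trans (sup_le_sup_right (le_dot x y) g))⟩
  compat x hx y hy := hI.compat x hx.1 y hy.1
  meet_mem x hx y hy m hm :=
    ⟨hI.meet_mem x hx.1 y hy.1 m hm,
      fun g hg => sup_comm g m ▸ hm.sup_eq_top (hx.2 g hg) (hy.2 g hg)⟩

lemma svee_sarrow_singleton {I J : Set L} (hI : IsSpecial I) (hJ : IsSpecial J) (hJI : J ⊆ I)
    {g : L} (hg : g ∈ J) : svee (sarrow {g} I) J = I := by
  refine subset_antisymm ?_ fun f hf => ?_
  · rintro z ⟨a, ha, b, hb, hm⟩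
    exact hI.meet_mem a ha.1 b (hJI hb) z hm
  · refine ⟨dot g f, ⟨hI.dot_mem g (hJI hg) f hf, ?_⟩,
      g ⊔ f, hJ.upward g hg _ le_sup_left, isMeet_dot_sup g f⟩
    intro _ hg'
    rw [Set.mem_singleton_iff.mp hg', sup_comm]
    exact sup_dot_eq_top g f

end CubicAlgebra

open CubicAlgebra in
/-- `⋂{H special : H ∨ J = I} = J → I`. -/
theorem sInter_eq_sarrow {L : Type u} [CubicAlgebra L] (I J : Set L)
    (hI : IsSpecial I) (hJ : IsSpecial J) (hJI : J ⊆ I) :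
    ⋂₀ {H : Set L | IsSpecial H ∧ svee H J = I} = sarrow J I := by
  refine subset_antisymm (fun x hx => ?_) fun x hx H ⟨_, hHJ⟩ => ?_
  · have hxg : ∀ g ∈ J, x ∈ sarrow {g} I := fun g hg =>
      hx _ ⟨hI.sarrow {g}, svee_sarrow_singleton hI hJ hJI hg⟩
    exact ⟨(hxg ⊤ hJ.top_mem).1, fun g hg => (hxg g hg).2 g rfl⟩
  · obtain ⟨a, ha, b, hb, hm⟩ : x ∈ svee H J := hHJ ▸ hx.1
    exact hm.eq_left_of_sup_eq_top (hx.2 b hb) ▸ ha
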